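/- Let Φ and Φ' be I-Lagrangian frames in ℂ^{2L} with unitary stereographic projections U = Π(Φ) and U' = Π(Φ'). Then dim(Ran(Φ) ∩ Ran(Φ')) = dim Ker(U'* U - 1). -/

import Mathlib

open Matrix

variable {L : ℕ}

/-- The matrix `ℐ = (0,-1;1,0)` in `L×L` blocks. -/
def Iop (L : ℕ) : Matrix (Fin L ⊕ Fin L) (Fin L ⊕ Fin L) ℂ :=
  Matrix.fromBlocks 0 (-1) 1 0

/-- The Cayley matrix `2^{-1/2} (1, -i·1; 1, i·1)`. -/
noncomputable def cayley (L : ℕ) : Matrix (Fin L ⊕ Fin L) (Fin L ⊕ Fin L) ℂ :=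
  ((Real.sqrt 2 : ℂ))⁻¹ •
    Matrix.fromBlocks 1 ((-Complex.I) • (1 : Matrix (Fin L) (Fin L) ℂ)) 1
      (Complex.I • (1 : Matrix (Fin L) (Fin L) ℂ))

/-- The upper block `a` of `2^{-1/2}(1,-i1;1,i1)Φ`. -/
noncomputable def aMat (Φ : Matrix (Fin L ⊕ Fin L) (Fin L) ℂ) : Matrix (Fin L) (Fin L) ℂ :=
  (cayley L * Φ).submatrix Sum.inl id

/-- The lower block `b` of `2^{-1/2}(1,-i1;1,i1)Φ`. -/
noncomputable def bMat (Φ : Matrix (Fin L ⊕ Fin L) (Fin L) ℂ) : Matrix (Fin L) (Fin L) ℂ :=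
  (cayley L * Φ).submatrix Sum.inr id


/-- The stereographic projection `Π(Φ) = a b⁻¹`. -/
noncomputable def stereo (Φ : Matrix (Fin L ⊕ Fin L) (Fin L) ℂ) : Matrix (Fin L) (Fin L) ℂ :=
  aMat Φ * (bMat Φ)⁻¹

/-! The Cayley matrix `C` is unitary and `Cᴴ diag(1, -1) C = i ℐ`, so writing `CΦ = (a; b)`
the frame `Φ` is `ℐ`-Lagrangian exactly when `aᴴa = bᴴb`. With `Φ` of full rank this forces `b`
to be invertible, so `U = ab⁻¹` is unitary and `C` maps `Ran Φ` onto the graph `Ran (U; 1)`.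
Two graphs `Ran (U; 1)` and `Ran (U'; 1)` meet in the image of `Ker (U - U')`, which equals
`Ker (U'ᴴU - 1)` since `U'` is unitary. -/

namespace Matrix

theorem mulVec_injective_of_rank_eq_card {m n K : Type*} [Fintype n] [Field K]
    {A : Matrix m n K} (hA : A.rank = Fintype.card n) : Function.Injective A.mulVec := by
  have h := A.mulVecLin.finrank_range_add_finrank_ker
  rwa [← rank, hA, Module.finrank_fintype_fun_eq_card, Nat.add_eq_left,
    Submodule.finrank_eq_zero, LinearMap.ker_eq_bot] at h

section CommRing

variable {m n R : Type*} [Fintype n] [DecidableEq n] [CommRing R]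

theorem fromRows_one_mulVec_injective (U : Matrix m n R) :
    Function.Injective (fromRows U (1 : Matrix n n R)).mulVec := fun x y hxy => by
  rw [fromRows_mulVec, fromRows_mulVec] at hxy
  simpa only [one_mulVec] using (Sum.elim_eq_iff.mp hxy).2

theorem range_fromRows_eq_range_fromRows_mul_inv_one {a : Matrix m n R} {b : Matrix n n R}
    (hb : IsUnit b) :
    LinearMap.range (fromRows a b).mulVecLin
      = LinearMap.range (fromRows (a * b⁻¹) (1 : Matrix n n R)).mulVecLin := by
  have hab : fromRows a b = fromRows (a * b⁻¹) 1 * b := by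
    rw [fromRows_mul, Matrix.one_mul,
      nonsing_inv_mul_cancel_right _ _ ((isUnit_iff_isUnit_det b).mp hb)]
  rw [hab, mulVecLin_mul, LinearMap.range_comp,
    LinearMap.range_eq_top.mpr (mulVec_surjective_iff_isUnit.mpr hb), Submodule.map_top]

theorem range_fromRows_one_inf_range_fromRows_one (U V : Matrix m n R) :
    LinearMap.range (fromRows U (1 : Matrix n n R)).mulVecLin
        ⊓ LinearMap.range (fromRows V (1 : Matrix n n R)).mulVecLin
      = (LinearMap.ker (U - V).mulVecLin).map (fromRows U (1 : Matrix n n R)).mulVecLin := by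
  ext v
  simp only [Submodule.mem_inf, Submodule.mem_map, LinearMap.mem_range, LinearMap.mem_ker,
    mulVecLin_apply, sub_mulVec, sub_eq_zero]
  constructor
  · rintro ⟨⟨x, rfl⟩, ⟨y, hy⟩⟩
    obtain ⟨hUV, hxy⟩ := Sum.elim_eq_iff.mp (by simpa only [fromRows_mulVec] using hy)
    simp only [one_mulVec] at hxy
    exact ⟨x, by rw [← hUV, hxy], rfl⟩
  · rintro ⟨x, hUV, rfl⟩
    exact ⟨⟨x, rfl⟩, ⟨x, by rw [fromRows_mulVec, fromRows_mulVec, hUV]⟩⟩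

end CommRing

section Field

variable {m n K : Type*} [Fintype n] [DecidableEq n] [Field K]

theorem finrank_range_fromRows_one_inf_range_fromRows_one (U V : Matrix m n K) :
    Module.finrank K ↥(LinearMap.range (fromRows U (1 : Matrix n n K)).mulVecLin
        ⊓ LinearMap.range (fromRows V (1 : Matrix n n K)).mulVecLin)
      = Module.finrank K ↥(LinearMap.ker (U - V).mulVecLin) := by
  rw [range_fromRows_one_inf_range_fromRows_one]
  exact (Submodule.equivMapOfInjective _ (fromRows_one_mulVec_injective U) _).finrank_eq.symm

theorem ker_conjTranspose_mul_sub_one [StarRing K] {U V : Matrix n n K} (hV : Vᴴ * V = 1) :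
    LinearMap.ker (Vᴴ * U - 1).mulVecLin = LinearMap.ker (U - V).mulVecLin := by
  rw [show Vᴴ * U - 1 = Vᴴ * (U - V) by rw [Matrix.mul_sub, hV], mulVecLin_mul,
    LinearMap.ker_comp_of_ker_eq_bot]
  exact LinearMap.ker_eq_bot.mpr (mulVec_injective_of_isUnit (IsUnit.of_mul_eq_one V hV))

theorem conjTranspose_mul_self_mul_inv [StarRing K] {a b : Matrix n n K} (hb : IsUnit b)
    (hab : aᴴ * a = bᴴ * b) : (a * b⁻¹)ᴴ * (a * b⁻¹) = 1 := by
  have hb' : b * b⁻¹ = 1 := mul_nonsing_inv _ ((isUnit_iff_isUnit_det b).mp hb)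
  calc (a * b⁻¹)ᴴ * (a * b⁻¹) = b⁻¹ᴴ * (aᴴ * a) * b⁻¹ := by
        simp only [conjTranspose_mul, Matrix.mul_assoc]
    _ = (b * b⁻¹)ᴴ * (b * b⁻¹) := by
        simp only [hab, conjTranspose_mul, Matrix.mul_assoc]
    _ = 1 := by rw [hb', conjTranspose_one, Matrix.one_mul]

theorem isUnit_of_conjTranspose_mul_self_eq [PartialOrder K] [StarRing K] [StarOrderedRing K]
    {a b : Matrix n n K} (hab : aᴴ * a = bᴴ * b)
    (hinj : Function.Injective (fromRows a b).mulVec) : IsUnit b := by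
  rw [← mulVec_injective_iff_isUnit, ← coe_mulVecLin, ← LinearMap.ker_eq_bot,
    ker_mulVecLin_eq_bot_iff]
  intro x hbx
  have hax : a *ᵥ x = 0 := by
    rw [← dotProduct_star_self_eq_zero, star_mulVec, ← dotProduct_mulVec, mulVec_mulVec, hab,
      ← mulVec_mulVec, hbx, mulVec_zero, dotProduct_zero]
  exact hinj (by rw [fromRows_mulVec, hax, hbx, mulVec_zero]; exact Sum.elim_zero_zero)

end Field

theorem conjTranspose_fromRows_mul_fromBlocks_mul_fromRows {m n R : Type*} [Fintype m]
    [DecidableEq m] [CommRing R] [StarRing R] (a b : Matrix m n R) :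
    (fromRows a b)ᴴ * (fromBlocks 1 0 0 (-1) : Matrix (m ⊕ m) (m ⊕ m) R) * fromRows a b
      = aᴴ * a - bᴴ * b := by
  rw [conjTranspose_fromRows_eq_fromCols_conjTranspose, Matrix.mul_assoc,
    fromBlocks_mul_fromRows, fromCols_mul_fromRows]
  simp [sub_eq_add_neg]

end Matrix

theorem inv_sqrt_two_mul_self : ((Real.sqrt 2 : ℂ))⁻¹ * ((Real.sqrt 2 : ℂ))⁻¹ = 2⁻¹ := by
  rw [← mul_inv, ← Complex.ofReal_mul, Real.mul_self_sqrt zero_le_two]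
  norm_num

section LagrangianFrame

theorem cayley_conjTranspose_mul_self : (cayley L)ᴴ * cayley L = 1 := by
  rw [cayley, conjTranspose_smul, smul_mul_smul_comm, Complex.star_def, map_inv₀,
    Complex.conj_ofReal, inv_sqrt_two_mul_self, fromBlocks_conjTranspose, fromBlocks_multiply]
  ext (i | i) (j | j) <;> simp [one_apply] <;> split_ifs <;> ring

theorem cayley_conjTranspose_mul_fromBlocks_mul_self :
    (cayley L)ᴴ * (fromBlocks 1 0 0 (-1) : Matrix (Fin L ⊕ Fin L) _ ℂ) * cayley L
      = Complex.I • Iop L := by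
  rw [cayley, conjTranspose_smul, smul_mul, smul_mul_smul_comm, Complex.star_def, map_inv₀,
    Complex.conj_ofReal, inv_sqrt_two_mul_self, fromBlocks_conjTranspose, fromBlocks_multiply,
    fromBlocks_multiply, Iop]
  ext (i | i) (j | j) <;> simp [one_apply] <;> split_ifs <;> ring

theorem cayley_mulVec_injective : Function.Injective (cayley L).mulVec :=
  mulVec_injective_of_isUnit (IsUnit.of_mul_eq_one_right _ cayley_conjTranspose_mul_self)

theorem fromRows_aMat_bMat (Φ : Matrix (Fin L ⊕ Fin L) (Fin L) ℂ) :
    fromRows (aMat Φ) (bMat Φ) = cayley L * Φ :=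
  fromRows_toRows _

variable {Φ : Matrix (Fin L ⊕ Fin L) (Fin L) ℂ}

theorem aMat_conjTranspose_mul_self (hiso : Φᴴ * Iop L * Φ = 0) :
    (aMat Φ)ᴴ * aMat Φ = (bMat Φ)ᴴ * bMat Φ := by
  refine sub_eq_zero.mp ?_
  calc (aMat Φ)ᴴ * aMat Φ - (bMat Φ)ᴴ * bMat Φ
      = (fromRows (aMat Φ) (bMat Φ))ᴴ * (fromBlocks 1 0 0 (-1) : Matrix (Fin L ⊕ Fin L) _ ℂ)
          * fromRows (aMat Φ) (bMat Φ) :=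
        (conjTranspose_fromRows_mul_fromBlocks_mul_fromRows _ _).symm
    _ = Φᴴ * ((cayley L)ᴴ * (fromBlocks 1 0 0 (-1) : Matrix (Fin L ⊕ Fin L) _ ℂ) * cayley L)
          * Φ := by
        simp only [fromRows_aMat_bMat, conjTranspose_mul, Matrix.mul_assoc]
    _ = 0 := by
        rw [cayley_conjTranspose_mul_fromBlocks_mul_self, Matrix.mul_smul, Matrix.smul_mul, hiso,
          smul_zero]

theorem isUnit_bMat (hrank : Φ.rank = L) (hiso : Φᴴ * Iop L * Φ = 0) : IsUnit (bMat Φ) := by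
  open scoped ComplexOrder in
  refine isUnit_of_conjTranspose_mul_self_eq (aMat_conjTranspose_mul_self hiso) ?_
  intro x y hxy
  rw [fromRows_aMat_bMat, ← mulVec_mulVec, ← mulVec_mulVec] at hxy
  exact mulVec_injective_of_rank_eq_card (hrank.trans (Fintype.card_fin L).symm)
    (cayley_mulVec_injective hxy)

theorem stereo_conjTranspose_mul_self (hrank : Φ.rank = L) (hiso : Φᴴ * Iop L * Φ = 0) :
    (stereo Φ)ᴴ * stereo Φ = 1 :=
  conjTranspose_mul_self_mul_inv (isUnit_bMat hrank hiso) (aMat_conjTranspose_mul_self hiso)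

theorem map_cayley_range (hrank : Φ.rank = L) (hiso : Φᴴ * Iop L * Φ = 0) :
    (LinearMap.range Φ.mulVecLin).map (cayley L).mulVecLin
      = LinearMap.range (fromRows (stereo Φ) (1 : Matrix (Fin L) (Fin L) ℂ)).mulVecLin := by
  rw [← LinearMap.range_comp, ← mulVecLin_mul, ← fromRows_aMat_bMat,
    range_fromRows_eq_range_fromRows_mul_inv_one (isUnit_bMat hrank hiso), stereo]

end LagrangianFrame

/-- for two `ℐ`-Lagrangian frames `Φ` and `Φ'` with stereographic
projections `U = Π(Φ)` and `U' = Π(Φ')`, the dimension of the intersection of their ranges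
equals `dim Ker(U'* U - 1)`. -/
theorem intersection_dim_eq_ker_dim
    (Φ Φ' : Matrix (Fin L ⊕ Fin L) (Fin L) ℂ)
    (hrank : Φ.rank = L) (hiso : Φᴴ * Iop L * Φ = 0)
    (hrank' : Φ'.rank = L) (hiso' : Φ'ᴴ * Iop L * Φ' = 0) :
    Module.finrank ℂ ↥(LinearMap.range Φ.mulVecLin ⊓ LinearMap.range Φ'.mulVecLin)
      = Module.finrank ℂ ↥(LinearMap.ker ((stereo Φ')ᴴ * stereo Φ - 1).mulVecLin) := by
  calc Module.finrank ℂ ↥(LinearMap.range Φ.mulVecLin ⊓ LinearMap.range Φ'.mulVecLin)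
      = Module.finrank ℂ
          ↥((LinearMap.range Φ.mulVecLin ⊓ LinearMap.range Φ'.mulVecLin).map
            (cayley L).mulVecLin) :=
        (Submodule.equivMapOfInjective _ cayley_mulVec_injective _).finrank_eq
    _ = Module.finrank ℂ ↥(LinearMap.range (fromRows (stereo Φ) 1).mulVecLin
          ⊓ LinearMap.range (fromRows (stereo Φ') 1).mulVecLin) := by
        rw [Submodule.map_inf _ cayley_mulVec_injective, map_cayley_range hrank hiso,
          map_cayley_range hrank' hiso']
    _ = Module.finrank ℂ ↥(LinearMap.ker (stereo Φ - stereo Φ').mulVecLin) :=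
        finrank_range_fromRows_one_inf_range_fromRows_one _ _
    _ = _ := by
        rw [ker_conjTranspose_mul_sub_one (stereo_conjTranspose_mul_self hrank' hiso')]
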